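/- Let B = ⊕_{g∈G} B_g be a G-graded ring satisfying B_g · B_{g⁻¹} · B_g = B_g for all g ∈ G. Then for all g,h ∈ G: (i) B_{g⁻¹}·B_g·B_h = B_{g⁻¹}·B_{gh} and B_g·B_h·B_{h⁻¹} = B_{gh}·B_{h⁻¹}; (ii) setting D_g = B_g·B_{g⁻¹}, one has D_g·D_h = D_h·D_g; (iii) D_g·B_g = B_g and B_g·D_{g⁻¹} = B_g. -/

import Mathlib

/-- The additive subgroup generated by products of elements of `S` and `T`. -/
def setMul {B : Type} [NonUnitalRing B] (S T : AddSubgroup B) : AddSubgroup B :=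
  AddSubgroup.closure (Set.image2 (· * ·) (S : Set B) (T : Set B))

/-!
Everything follows from associativity of `setMul`, the grading `B_a·B_b ⊆ B_{ab}` and the
regularity `B_g = B_g·B_{g⁻¹}·B_g`, used to reinsert a factor: for instance
`B_{g⁻¹}·B_{gh} = B_{g⁻¹}·B_g·B_{g⁻¹}·B_{gh} ⊆ B_{g⁻¹}·B_g·B_h`. Part (i) rewrites
`D_a·D_b` as `B_a·B_{a⁻¹b}·B_{b⁻¹}`, and expanding the middle factor `B_c`, `c = a⁻¹b`, to
`B_c·B_{c⁻¹}·B_c` gives `B_a·B_c·B_{c⁻¹}·B_c·B_{b⁻¹} ⊆ B_b·B_{b⁻¹a}·B_{a⁻¹} = D_b·D_a`.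
-/

section SetMul

variable {B : Type} [NonUnitalRing B]

lemma mul_mem_setMul {S T : AddSubgroup B} {s t : B} (hs : s ∈ S) (ht : t ∈ T) :
    s * t ∈ setMul S T :=
  AddSubgroup.subset_closure ⟨s, hs, t, ht, rfl⟩

lemma setMul_le {S T U : AddSubgroup B} (h : ∀ s ∈ S, ∀ t ∈ T, s * t ∈ U) :
    setMul S T ≤ U := by
  refine (AddSubgroup.closure_le _).2 ?_
  rintro x ⟨s, hs, t, ht, rfl⟩
  exact h s hs t ht

lemma setMul_mono {S S' T T' : AddSubgroup B} (hS : S ≤ S') (hT : T ≤ T') :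
    setMul S T ≤ setMul S' T' :=
  setMul_le fun _ hs _ ht => mul_mem_setMul (hS hs) (hT ht)

lemma setMul_assoc (S T U : AddSubgroup B) :
    setMul (setMul S T) U = setMul S (setMul T U) := by
  apply le_antisymm
  · refine setMul_le fun x hx u hu => ?_
    induction hx using AddSubgroup.closure_induction with
    | mem y hy =>
      obtain ⟨s, hs, t, ht, rfl⟩ := hy
      rw [mul_assoc]
      exact mul_mem_setMul hs (mul_mem_setMul ht hu)
    | zero => simp
    | add x y _ _ hx hy => simpa [add_mul] using add_mem hx hy
    | neg x _ hx => simpa [neg_mul] using neg_mem hx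
  · refine setMul_le fun s hs y hy => ?_
    induction hy using AddSubgroup.closure_induction with
    | mem y hy =>
      obtain ⟨t, ht, u, hu, rfl⟩ := hy
      rw [← mul_assoc]
      exact mul_mem_setMul (mul_mem_setMul hs ht) hu
    | zero => simp
    | add x y _ _ hx hy => simpa [mul_add] using add_mem hx hy
    | neg x _ hx => simpa [mul_neg] using neg_mem hx

end SetMul

section Graded

variable {G B : Type} [Group G] [NonUnitalRing B] {Bc : G → AddSubgroup B}

lemma setMul_le_of_mul_eq (hmul : ∀ a b, setMul (Bc a) (Bc b) ≤ Bc (a * b))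
    {a b c : G} (h : a * b = c) : setMul (Bc a) (Bc b) ≤ Bc c :=
  h ▸ hmul a b

lemma setMul_inv_self_setMul (hmul : ∀ a b, setMul (Bc a) (Bc b) ≤ Bc (a * b))
    (hpr : ∀ g, setMul (setMul (Bc g) (Bc g⁻¹)) (Bc g) = Bc g) (a b : G) :
    setMul (setMul (Bc a⁻¹) (Bc a)) (Bc b) = setMul (Bc a⁻¹) (Bc (a * b)) := by
  apply le_antisymm
  · rw [setMul_assoc]
    exact setMul_mono le_rfl (hmul a b)
  · have hreg : setMul (setMul (Bc a⁻¹) (Bc a)) (Bc a⁻¹) = Bc a⁻¹ := by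
      simpa using hpr a⁻¹
    calc setMul (Bc a⁻¹) (Bc (a * b))
        = setMul (setMul (Bc a⁻¹) (Bc a)) (setMul (Bc a⁻¹) (Bc (a * b))) := by
          rw [← setMul_assoc, hreg]
      _ ≤ setMul (setMul (Bc a⁻¹) (Bc a)) (Bc b) :=
          setMul_mono le_rfl (setMul_le_of_mul_eq hmul (inv_mul_cancel_left a b))

lemma setMul_setMul_self_inv (hmul : ∀ a b, setMul (Bc a) (Bc b) ≤ Bc (a * b))
    (hpr : ∀ g, setMul (setMul (Bc g) (Bc g⁻¹)) (Bc g) = Bc g) (a b : G) :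
    setMul (setMul (Bc a) (Bc b)) (Bc b⁻¹) = setMul (Bc (a * b)) (Bc b⁻¹) := by
  apply le_antisymm
  · exact setMul_mono (hmul a b) le_rfl
  · have hreg : setMul (setMul (Bc b⁻¹) (Bc b)) (Bc b⁻¹) = Bc b⁻¹ := by
      simpa using hpr b⁻¹
    calc setMul (Bc (a * b)) (Bc b⁻¹)
        = setMul (setMul (Bc (a * b)) (Bc b⁻¹)) (setMul (Bc b) (Bc b⁻¹)) := by
          rw [setMul_assoc, ← setMul_assoc (Bc b⁻¹), hreg]
      _ ≤ setMul (setMul (Bc a) (Bc b)) (Bc b⁻¹) := by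
          rw [← setMul_assoc]
          exact setMul_mono
            (setMul_mono (setMul_le_of_mul_eq hmul (mul_inv_cancel_right a b)) le_rfl) le_rfl

lemma setMul_mul_inv_setMul_mul_inv (hmul : ∀ a b, setMul (Bc a) (Bc b) ≤ Bc (a * b))
    (hpr : ∀ g, setMul (setMul (Bc g) (Bc g⁻¹)) (Bc g) = Bc g) (a b : G) :
    setMul (setMul (Bc a) (Bc a⁻¹)) (setMul (Bc b) (Bc b⁻¹)) =
      setMul (setMul (Bc a) (Bc (a⁻¹ * b))) (Bc b⁻¹) := by
  have h := setMul_inv_self_setMul hmul hpr a⁻¹ b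
  rw [inv_inv] at h
  rw [← setMul_assoc, h]

lemma setMul_mul_inv_comm_le (hmul : ∀ a b, setMul (Bc a) (Bc b) ≤ Bc (a * b))
    (hpr : ∀ g, setMul (setMul (Bc g) (Bc g⁻¹)) (Bc g) = Bc g) (a b : G) :
    setMul (setMul (Bc a) (Bc a⁻¹)) (setMul (Bc b) (Bc b⁻¹)) ≤
      setMul (setMul (Bc b) (Bc b⁻¹)) (setMul (Bc a) (Bc a⁻¹)) := by
  rw [setMul_mul_inv_setMul_mul_inv hmul hpr, setMul_mul_inv_setMul_mul_inv hmul hpr]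
  have hreg := hpr (a⁻¹ * b)
  rw [mul_inv_rev, inv_inv] at hreg
  calc setMul (setMul (Bc a) (Bc (a⁻¹ * b))) (Bc b⁻¹)
      = setMul (setMul (setMul (Bc a) (Bc (a⁻¹ * b))) (Bc (b⁻¹ * a)))
          (setMul (Bc (a⁻¹ * b)) (Bc b⁻¹)) := by
        conv_lhs => rw [← hreg]
        simp only [setMul_assoc]
    _ ≤ setMul (setMul (Bc b) (Bc (b⁻¹ * a))) (Bc a⁻¹) :=
        setMul_mono (setMul_mono (setMul_le_of_mul_eq hmul (mul_inv_cancel_left a b)) le_rfl)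
          (setMul_le_of_mul_eq hmul (by group))

end Graded

theorem graded_easy_lemma_general {G B : Type} [Group G] [NonUnitalRing B]
    (Bc : G → AddSubgroup B)
    (hgrmul : ∀ (g h : G) (x y : B), x ∈ Bc g → y ∈ Bc h → x * y ∈ Bc (g * h))
    (hpr : ∀ g : G, setMul (setMul (Bc g) (Bc g⁻¹)) (Bc g) = Bc g)
    (g h : G) :
    setMul (setMul (Bc g⁻¹) (Bc g)) (Bc h) = setMul (Bc g⁻¹) (Bc (g * h)) ∧
    setMul (setMul (Bc g) (Bc h)) (Bc h⁻¹) = setMul (Bc (g * h)) (Bc h⁻¹) ∧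
    setMul (setMul (Bc g) (Bc g⁻¹)) (setMul (Bc h) (Bc h⁻¹)) =
      setMul (setMul (Bc h) (Bc h⁻¹)) (setMul (Bc g) (Bc g⁻¹)) ∧
    setMul (setMul (Bc g) (Bc g⁻¹)) (Bc g) = Bc g ∧
    setMul (Bc g) (setMul (Bc g⁻¹) (Bc g)) = Bc g := by
  have hmul : ∀ a b, setMul (Bc a) (Bc b) ≤ Bc (a * b) := fun a b =>
    setMul_le fun x hx y hy => hgrmul a b x y hx hy
  refine ⟨setMul_inv_self_setMul hmul hpr g h, setMul_setMul_self_inv hmul hpr g h,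
    le_antisymm (setMul_mul_inv_comm_le hmul hpr g h) (setMul_mul_inv_comm_le hmul hpr h g),
    hpr g, ?_⟩
  rw [← setMul_assoc, hpr g]

/-- STATEMENT 6, Lemma 5.3: if `B = ⊕_{g∈G} B_g` is a `G`-graded ring with
`B_g·B_{g⁻¹}·B_g = B_g` for all `g`, then for all `g, h ∈ G`:
(i) `B_{g⁻¹}·B_g·B_h = B_{g⁻¹}·B_{gh}` and `B_g·B_h·B_{h⁻¹} = B_{gh}·B_{h⁻¹}`;
(ii) `D_g·D_h = D_h·D_g` for `D_g = B_g·B_{g⁻¹}`;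
(iii) `D_g·B_g = B_g` and `B_g·D_{g⁻¹} = B_g`. -/
theorem graded_easy_lemma {G B : Type} [Group G] [DecidableEq G] [NonUnitalRing B]
    (Bc : G → AddSubgroup B)
    (hdir : DirectSum.IsInternal Bc)
    (hgrmul : ∀ (g h : G) (x y : B), x ∈ Bc g → y ∈ Bc h → x * y ∈ Bc (g * h))
    (hpr : ∀ g : G, setMul (setMul (Bc g) (Bc g⁻¹)) (Bc g) = Bc g)
    (g h : G) :
    setMul (setMul (Bc g⁻¹) (Bc g)) (Bc h) = setMul (Bc g⁻¹) (Bc (g * h)) ∧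
    setMul (setMul (Bc g) (Bc h)) (Bc h⁻¹) = setMul (Bc (g * h)) (Bc h⁻¹) ∧
    setMul (setMul (Bc g) (Bc g⁻¹)) (setMul (Bc h) (Bc h⁻¹)) =
      setMul (setMul (Bc h) (Bc h⁻¹)) (setMul (Bc g) (Bc g⁻¹)) ∧
    setMul (setMul (Bc g) (Bc g⁻¹)) (Bc g) = Bc g ∧
    setMul (Bc g) (setMul (Bc g⁻¹) (Bc g)) = Bc g :=
  graded_easy_lemma_general Bc hgrmul hpr g h
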